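/- The function f(x) = 1/(π(1-x)√((1-2x)x)) for 0 < x < 1/2 (and 0 otherwise) is a probability density function, and if Y has density f then E[Y²] = 1 − 5/(4√2). -/

import Mathlib

open MeasureTheory Real

/-- The limit density of the M-coin walk with initial qubit `|1⟩^{⊗M}`:
`f(x) = 1/(π(1-x)√((1-2x)x))` on `(0, 1/2)`. -/
noncomputable def brunDensity (x : ℝ) : ℝ :=
  if 0 < x ∧ x < 1 / 2 then 1 / (Real.pi * (1 - x) * Real.sqrt ((1 - 2 * x) * x)) else 0

/-!
Both integrals are evaluated with explicit primitives on `(0, 1/2)` that extend continuously to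
`[0, 1/2]`. The integrands are nonnegative, so the fundamental theorem of calculus applies with no
separate integrability argument, despite the singularities at both endpoints.
-/

open Set

theorem intervalIntegral.integral_eq_sub_of_hasDerivAt_of_nonneg {f f' : ℝ → ℝ} {a b : ℝ}
    (hab : a ≤ b) (hcont : ContinuousOn f (Icc a b))
    (hderiv : ∀ x ∈ Ioo a b, HasDerivAt f (f' x) x) (hpos : ∀ x ∈ Ioo a b, 0 ≤ f' x) :
    ∫ x in a..b, f' x = f b - f a :=
  integral_eq_sub_of_hasDerivAt_of_le hab hcont hderiv <|
    (intervalIntegrable_iff_integrableOn_Ioc_of_le hab).2 <|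
      integrableOn_deriv_of_nonneg hcont hderiv hpos

theorem MeasureTheory.integral_eq_intervalIntegral_of_forall_notMem_Ioo_eq_zero
    {E : Type*} [NormedAddCommGroup E] [NormedSpace ℝ E] {f : ℝ → E} {a b : ℝ} (hab : a ≤ b)
    (hf : ∀ x ∉ Ioo a b, f x = 0) : ∫ x, f x = ∫ x in a..b, f x := by
  rw [intervalIntegral.integral_of_le hab, integral_Ioc_eq_integral_Ioo,
    setIntegral_eq_integral_of_forall_compl_eq_zero hf]

theorem brunDensity_of_mem {x : ℝ} (hx : x ∈ Ioo (0 : ℝ) (1 / 2)) :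
    brunDensity x = 1 / (π * (1 - x) * √((1 - 2 * x) * x)) :=
  if_pos hx

theorem brunDensity_nonneg (x : ℝ) : 0 ≤ brunDensity x := by
  unfold brunDensity
  split_ifs with hx
  · have : 0 < 1 - x := by linarith [hx.2]
    positivity
  · rfl

theorem brunDensity_eq_zero_of_notMem {x : ℝ} (hx : x ∉ Ioo (0 : ℝ) (1 / 2)) :
    brunDensity x = 0 :=
  if_neg hx

/-- With `x / (1 - x) = sin² θ` one has `brunDensity x dx = (2 / π) dθ`, and
`(1 - 3x) / (1 - x) = cos 2θ`; unlike `arctan √(x / (1 - 2x))`, this form is continuous at `1/2`. -/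
noncomputable def brunPrimitive (x : ℝ) : ℝ := arccos ((1 - 3 * x) / (1 - x)) / π

theorem hasDerivAt_brunPrimitive {x : ℝ} (hx : x ∈ Ioo (0 : ℝ) (1 / 2)) :
    HasDerivAt brunPrimitive (brunDensity x) x := by
  obtain ⟨hx0, hx2⟩ := hx
  have h1x : 0 < 1 - x := by linarith
  have hq : 0 < (1 - 2 * x) * x := by nlinarith
  have hv : HasDerivAt (fun y => (1 - 3 * y) / (1 - y)) (-2 / (1 - x) ^ 2) x := by
    have := ((hasDerivAt_id x).const_mul 3 |>.const_sub 1).div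
      ((hasDerivAt_id x).const_sub 1) h1x.ne'
    refine this.congr_deriv ?_
    simp only [id]
    ring
  have hlo : (1 - 3 * x) / (1 - x) ≠ -1 := by
    rw [Ne, div_eq_iff h1x.ne']; intro h; linarith
  have hhi : (1 - 3 * x) / (1 - x) ≠ 1 := by
    rw [Ne, div_eq_iff h1x.ne']; intro h; linarith
  have hroot : √(1 - ((1 - 3 * x) / (1 - x)) ^ 2) = 2 * √((1 - 2 * x) * x) / (1 - x) := by
    rw [sqrt_eq_iff_mul_self_eq_of_pos (by positivity)]
    field_simp
    rw [sq_sqrt (by nlinarith)]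
    ring
  refine (((hasDerivAt_arccos hlo hhi).comp x hv).div_const π).congr_deriv ?_
  rw [brunDensity_of_mem ⟨hx0, hx2⟩, hroot]
  field_simp

/-- Since `x² / (1 - x) = 1 / (1 - x) - 1 - x`, the second moment density is `brunDensity` plus
multiples of the derivatives of `√((1 - 2x) x)` and `arccos (4x - 1)`. -/
noncomputable def brunSecondMomentPrimitive (x : ℝ) : ℝ :=
  brunPrimitive x + √((1 - 2 * x) * x) / (2 * π) + 5 / (4 * √2 * π) * arccos (4 * x - 1)

theorem hasDerivAt_brunSecondMomentPrimitive {x : ℝ} (hx : x ∈ Ioo (0 : ℝ) (1 / 2)) :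
    HasDerivAt brunSecondMomentPrimitive (x ^ 2 * brunDensity x) x := by
  obtain ⟨hx0, hx2⟩ := hx
  have h1x : 0 < 1 - x := by linarith
  have hq : 0 < (1 - 2 * x) * x := by nlinarith
  have hquad : HasDerivAt (fun y => (1 - 2 * y) * y) (1 - 4 * x) x := by
    refine (((hasDerivAt_id x).const_mul 2).const_sub 1 |>.mul (hasDerivAt_id x)).congr_deriv ?_
    simp only [id]
    ring
  have hlin : HasDerivAt (fun y => 4 * y - 1) 4 x := by
    simpa using ((hasDerivAt_id x).const_mul 4).sub_const 1
  have hlo : 4 * x - 1 ≠ -1 := by intro h; linarith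
  have hhi : 4 * x - 1 ≠ 1 := by intro h; linarith
  have hroot : √(1 - (4 * x - 1) ^ 2) = 2 * √2 * √((1 - 2 * x) * x) := by
    rw [sqrt_eq_iff_mul_self_eq_of_pos (by positivity)]
    linear_combination 4 * (√((1 - 2 * x) * x) * √((1 - 2 * x) * x)) * mul_self_sqrt zero_le_two +
      8 * mul_self_sqrt hq.le
  refine (((hasDerivAt_brunPrimitive ⟨hx0, hx2⟩).add ((hquad.sqrt hq.ne').div_const (2 * π))).add
    (((hasDerivAt_arccos hlo hhi).comp x hlin).const_mul (5 / (4 * √2 * π)))).congr_deriv ?_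
  rw [brunDensity_of_mem ⟨hx0, hx2⟩, hroot]
  field_simp
  rw [sq_sqrt zero_le_two]
  ring

theorem continuousOn_brunPrimitive : ContinuousOn brunPrimitive (Iio 1) := by
  unfold brunPrimitive
  refine (continuous_arccos.comp_continuousOn ?_).div_const π
  exact (by fun_prop : Continuous fun x : ℝ => 1 - 3 * x).continuousOn.div (by fun_prop)
    fun x hx => (sub_pos.2 hx).ne'

theorem continuousOn_brunSecondMomentPrimitive :
    ContinuousOn brunSecondMomentPrimitive (Iio 1) := by
  unfold brunSecondMomentPrimitive
  exact (continuousOn_brunPrimitive.add (by fun_prop)).add (by fun_prop)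

theorem brunPrimitive_zero : brunPrimitive 0 = 0 := by simp [brunPrimitive]

theorem brunPrimitive_half : brunPrimitive (1 / 2) = 1 := by
  norm_num [brunPrimitive, pi_ne_zero]

theorem brunSecondMomentPrimitive_zero :
    brunSecondMomentPrimitive 0 = 5 / (4 * √2) := by
  simp only [brunSecondMomentPrimitive, brunPrimitive_zero, mul_zero, sub_zero, sqrt_zero,
    zero_div, add_zero, zero_sub, arccos_neg_one, zero_add]
  field_simp

theorem brunSecondMomentPrimitive_half : brunSecondMomentPrimitive (1 / 2) = 1 := by
  norm_num [brunSecondMomentPrimitive, brunPrimitive_half]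

theorem brunDensity_prob_and_second_moment :
    (∫ x : ℝ, brunDensity x = 1) ∧
    (∫ x : ℝ, x ^ 2 * brunDensity x = 1 - 5 / (4 * Real.sqrt 2)) := by
  have hIcc : Icc (0 : ℝ) (1 / 2) ⊆ Iio 1 := fun x hx => mem_Iio.2 (by linarith [hx.2])
  constructor
  · rw [integral_eq_intervalIntegral_of_forall_notMem_Ioo_eq_zero (by norm_num)
      fun x hx => brunDensity_eq_zero_of_notMem hx,
      intervalIntegral.integral_eq_sub_of_hasDerivAt_of_nonneg (by norm_num)
      (continuousOn_brunPrimitive.mono hIcc) (fun x hx => hasDerivAt_brunPrimitive hx)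
      fun x _ => brunDensity_nonneg x, brunPrimitive_zero, brunPrimitive_half, sub_zero]
  · rw [integral_eq_intervalIntegral_of_forall_notMem_Ioo_eq_zero (by norm_num)
      fun x hx => mul_eq_zero_of_right _ (brunDensity_eq_zero_of_notMem hx),
      intervalIntegral.integral_eq_sub_of_hasDerivAt_of_nonneg (by norm_num)
      (continuousOn_brunSecondMomentPrimitive.mono hIcc)
      (fun x hx => hasDerivAt_brunSecondMomentPrimitive hx)
      fun x _ => mul_nonneg (sq_nonneg x) (brunDensity_nonneg x),
      brunSecondMomentPrimitive_zero, brunSecondMomentPrimitive_half]
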